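/- Fix integers n_x, n_y ≥ 0, n_κ ∈ ℤ and α, ρ > 0. Then there exists ε with 0 < ε < α/2 such that for every pair of sets X, Y in the class C^ε_{α,ρ} with cardinalities n_x, n_y, and for every κ ∈ closure(D_{0,ε}), the function f(λ) = (−1)^s · ∏_{y ∈ Y ⊖ (X ⊕ {κ}^{⊕ n_κ})} sinh(iζ+y−λ)/sinh(iζ+λ−y) satisfies |1 + f(λ)| ≥ ρ/2 for every λ ∈ closure(D_{0,ε}); in particular 1+f has no zeroes in closure(D_{0,ε}). -/

import Mathlib

/-
Write `g(μ) = sinh(iζ + μ) / sinh(iζ - μ)`. Since `g(-μ) = g(μ)⁻¹`, `f(λ)` is `(-1)^s` times a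
product of `n_y + n_x + |n_κ|` factors `g(μ_i)` with `μ_i = y - λ`, `λ - x` or `±(λ - κ)`.
Replacing each `μ_i` by `y` resp. `0` (where `g(0) = 1`) gives `(-1)^s ∏_{y ∈ Y} g(y)`, which the
class `C^ε_{α,ρ}` keeps at distance `> ρ` from `-1`. Every denominator is `sinh(iζ - v)` with `v`
near `0` or near some `y ∈ Y`, hence at distance `≥ min(ζ_m, α)/2` from the zeros `i(ζ - kπ)`,
so it is bounded below uniformly in `X, Y, κ, λ`. Then every factor is bounded and Lipschitz in
`μ` with uniform constants, so `|f(λ) - (-1)^s ∏ g(y)| ≤ C ε`, and `C ε < ρ/2` for small `ε`.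
-/

noncomputable section
open Complex Filter Topology
open scoped Classical

namespace XXZ

/-- The open horizontal strip `S_a` of half-width `a` around the real axis. -/
def strip (a : ℝ) : Set ℂ := {z : ℂ | |z.im| < a}

/-- `ζ_m = min(ζ, π - ζ)`. -/
def zetam (ζ : ℝ) : ℝ := min ζ (Real.pi - ζ)

/-- The ball `B_r` of holomorphic functions on the strip `S_{ζ_m/2}` with sup-norm `≤ r`. -/
def holBall (ζ r : ℝ) : Set (ℂ → ℂ) :=
  {f | DifferentiableOn ℂ f (strip (zetam ζ / 2)) ∧
    ∀ z ∈ strip (zetam ζ / 2), Norm.norm (f z) ≤ r}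

/-- Hyperbolic cotangent. -/
def cothC (z : ℂ) : ℂ := Complex.cosh z / Complex.sinh z

/-- The kernel `K(ξ) = sgn(π-2ζ)/(2iπ) [coth(ξ-iζ_m) - coth(ξ+iζ_m)]`. -/
def Kker (ζ : ℝ) (ξ : ℂ) : ℂ :=
  ((Real.sign (Real.pi - 2 * ζ) : ℝ) : ℂ) / (2 * (Real.pi : ℂ) * Complex.I) *
    (cothC (ξ - Complex.I * (zetam ζ : ℝ)) - cothC (ξ + Complex.I * (zetam ζ : ℝ)))

/-- The bare energy `e₀(ξ) = h - 2J sin²ζ/(sinh ξ sinh(ξ-iζ))`. -/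
def e0fun (J h ζ : ℝ) (ξ : ℂ) : ℂ :=
  (h : ℂ) - 2 * (J : ℂ) * ((Real.sin ζ : ℝ) : ℂ) ^ 2 /
    (Complex.sinh ξ * Complex.sinh (ξ - Complex.I * (ζ : ℝ)))

/-- `ℵ = (J/T) sinh η = -i (J/T) sin ζ`. -/
def alephC (J T ζ : ℝ) : ℂ := -Complex.I * (J : ℂ) * ((Real.sin ζ : ℝ) : ℂ) / (T : ℂ)

/-- Integral of `f` along the circle `∂D_{0,ε}` from `κ` to `v` in the positive direction. -/
def arcIntegral (ε : ℝ) (κ v : ℂ) (f : ℂ → ℂ) : ℂ :=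
  ∫ θ in (Complex.arg κ)..(toIocMod Real.two_pi_pos (Complex.arg κ) (Complex.arg v)),
    f (circleMap 0 ε θ) * (circleMap 0 ε θ * Complex.I)

/-- The determination `Ln[1+e^A]` of the logarithm of `1 + e^A` along `∂D_{0,ε}`,
`Ln[1+e^A](v) = ∫_κ^v A'(u)/(1+e^{-A(u)}) du + log(1+e^{A(κ)})`,
the integral running from the base point `κ` to `v` in positive direction along `∂D_{0,ε}`. -/
def cLog (ε : ℝ) (κ : ℂ) (A : ℂ → ℂ) (v : ℂ) : ℂ :=
  arcIntegral ε κ v (fun u => deriv A u / (1 + Complex.exp (-(A u)))) +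
    Complex.log (1 + Complex.exp (A κ))

/-- Reduction of `z` modulo `iπℤ` to the fundamental strip `|Im| ≤ π/2`. -/
def reduceIpi (z : ℂ) : ℂ := z - ((round (z.im / Real.pi) : ℤ) : ℂ) * ((Real.pi : ℂ) * Complex.I)

/-- The function `θ`: the `iπ`-periodic determination of
`-i log(sinh(iζ+λ)/sinh(iζ-λ))` used in the paper. -/
def theta (ζ : ℝ) (lam : ℂ) : ℂ :=
  if |(reduceIpi lam).im| < zetam ζ then
    Complex.I * Complex.log
      (Complex.sinh (Complex.I * (ζ : ℝ) + reduceIpi lam) /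
        Complex.sinh (Complex.I * (ζ : ℝ) - reduceIpi lam))
  else
    -(Real.pi : ℂ) * ((Real.sign (Real.pi - 2 * ζ) : ℝ) : ℂ) +
      Complex.I * Complex.log
        (Complex.sinh (Complex.I * (ζ : ℝ) + reduceIpi lam) /
          Complex.sinh (reduceIpi lam - Complex.I * (ζ : ℝ)))

/-- The `+`-boundary value `θ₊` of `θ` on its cuts. -/
def thetaPlus (ζ : ℝ) (lam : ℂ) : ℂ :=
  if -(zetam ζ) ≤ (reduceIpi lam).im ∧ (reduceIpi lam).im < zetam ζ then
    Complex.I * Complex.log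
      (Complex.sinh (Complex.I * (ζ : ℝ) + reduceIpi lam) /
        Complex.sinh (Complex.I * (ζ : ℝ) - reduceIpi lam))
  else
    -(Real.pi : ℂ) * ((Real.sign (Real.pi - 2 * ζ) : ℝ) : ℂ) +
      Complex.I * Complex.log
        (Complex.sinh (Complex.I * (ζ : ℝ) + reduceIpi lam) /
          Complex.sinh (reduceIpi lam - Complex.I * (ζ : ℝ)))

/-- Congruence modulo `iπℤ`. -/
def modIpi (z w : ℂ) : Prop := ∃ k : ℤ, z - w = (k : ℂ) * ((Real.pi : ℂ) * Complex.I)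
/-- Membership of the (pairwise distinct) hole family `x` and particle family `y`
in the class `C^ε_{α,ρ}` (relative to the spin parameter `s`). -/
def InClassFam (ζ ε α ρ : ℝ) (s : ℤ) {nx ny : ℕ} (x : Fin nx → ℂ) (y : Fin ny → ℂ) : Prop :=
  Function.Injective x ∧ Function.Injective y ∧
  (∀ a, x a ∈ Metric.ball (0 : ℂ) ε) ∧
  (∀ b, y b ∈ strip (Real.pi / 2) \
      (Metric.ball (0 : ℂ) ε ∪ Metric.ball (Complex.I * (zetam ζ : ℝ)) α ∪
        Metric.ball (-(Complex.I * (zetam ζ : ℝ))) α)) ∧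
  ρ < Norm.norm ((-1 : ℂ) ^ s *
      (∏ b, Complex.sinh (Complex.I * (ζ : ℝ) + y b) /
        Complex.sinh (Complex.I * (ζ : ℝ) - y b)) + 1)

/-- `A_∞(ξ) = -iπs + i Σ_{y ∈ 𝕐_κ} θ(ξ - y)` where
`𝕐_κ = Y ⊖ (X ⊕ {κ}^{⊕(s+n_y-n_x)})` (signed multiplicities). -/
def Ainf (ζ : ℝ) (s : ℤ) {nx ny : ℕ} (x : Fin nx → ℂ) (y : Fin ny → ℂ) (κ ξ : ℂ) : ℂ :=
  -(Real.pi : ℂ) * Complex.I * (s : ℂ) +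
    Complex.I * ((∑ b, theta ζ (ξ - y b)) - (∑ a, theta ζ (ξ - x a)) -
      (((s + ny - nx : ℤ) : ℂ)) * theta ζ (ξ - κ))

/-- The driving term `w_N`. -/
def wN (J T ζ : ℝ) (N : ℕ) (ξ : ℂ) : ℂ :=
  (N : ℂ) * Complex.log
    (Complex.sinh (ξ - alephC J T ζ / (N : ℂ)) *
        Complex.sinh (ξ + alephC J T ζ / (N : ℂ) - Complex.I * (ζ : ℝ)) /
      (Complex.sinh (ξ + alephC J T ζ / (N : ℂ)) *
        Complex.sinh (ξ - alephC J T ζ / (N : ℂ) - Complex.I * (ζ : ℝ))))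

/-- `ϖ_N = h - T w_N`. -/
def varpiN (J h T ζ : ℝ) (N : ℕ) (lam : ℂ) : ℂ := (h : ℂ) - (T : ℂ) * wN J T ζ N lam

/-- `χ_{N;ε}(λ) = -∮_{∂D_{0,ε}} K(λ-u) ϖ_N(u)/(1+e^{-A_∞(u)}) du`. -/
def chiN (J h T ζ ε : ℝ) (N : ℕ) (Ainfty : ℂ → ℂ) (lam : ℂ) : ℂ :=
  -circleIntegral
      (fun u => Kker ζ (lam - u) * varpiN J h T ζ N u / (1 + Complex.exp (-(Ainfty u)))) 0 ε

/-- `χ_{∞;ε}(λ) = -∮_{∂D_{0,ε}} K(λ-u) e₀(u)/(1+e^{-A_∞(u)}) du`. -/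
def chiInf (J h ζ ε : ℝ) (Ainfty : ℂ → ℂ) (lam : ℂ) : ℂ :=
  -circleIntegral
      (fun u => Kker ζ (lam - u) * e0fun J h ζ u / (1 + Complex.exp (-(Ainfty u)))) 0 ε

/-- `𝔏(ν,x) = 1/(1+e^{-A_∞(ν)-x})`. -/
def scrL (Ainfty : ℂ → ℂ) (ν x : ℂ) : ℂ := 1 / (1 + Complex.exp (-(Ainfty ν) - x))

/-- `G[γ](ν,t) = γ(ν)γ'(ν) ∂₂𝔏(ν,tγ(ν)/T) + (1-t) γ(ν)² A_∞'(ν) ∂₂²𝔏(ν,tγ(ν)/T)`. -/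
def Gfun (Ainfty : ℂ → ℂ) (T : ℝ) (γ : ℂ → ℂ) (ν : ℂ) (t : ℝ) : ℂ :=
  γ ν * deriv γ ν * deriv (scrL Ainfty ν) ((t : ℂ) * γ ν / (T : ℂ)) +
    (1 - (t : ℂ)) * (γ ν) ^ 2 * deriv Ainfty ν *
      deriv (deriv (scrL Ainfty ν)) ((t : ℂ) * γ ν / (T : ℂ))

/-- The operator `O_{T,N}`. -/
def Oop (J h T ζ ε : ℝ) (N : ℕ) (Ainfty : ℂ → ℂ) (κ : ℂ) (ξ : ℂ → ℂ) : ℂ → ℂ :=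
  fun lam => chiN J h T ζ ε N Ainfty lam + (1 / (T : ℂ)) *
    circleIntegral
      (fun u => Kker ζ (lam - u) *
        arcIntegral ε κ u
          (fun ν => ∫ t in (0:ℝ)..1, Gfun Ainfty T (fun z => ξ z - varpiN J h T ζ N z) ν t)) 0 ε

/-- The operator `O_T` (infinite Trotter number). -/
def OopT (J h T ζ ε : ℝ) (Ainfty : ℂ → ℂ) (κ : ℂ) (ξ : ℂ → ℂ) : ℂ → ℂ :=
  fun lam => chiInf J h ζ ε Ainfty lam + (1 / (T : ℂ)) *
    circleIntegral
      (fun u => Kker ζ (lam - u) *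
        arcIntegral ε κ u
          (fun ν => ∫ t in (0:ℝ)..1, Gfun Ainfty T (fun z => ξ z - e0fun J h ζ z) ν t)) 0 ε

/-- The constant `𝔠 = 2 sup_{S_{ζ_m/2}} |χ_{∞;ε}|`. -/
def cBound (J h ζ ε : ℝ) (Ainfty : ℂ → ℂ) : ℝ :=
  2 * sSup ((fun lam => Norm.norm (chiInf J h ζ ε Ainfty lam)) '' strip (zetam ζ / 2))

/-- The function
`f(λ) = (-1)^s ∏_{y ∈ Y ⊖ (X ⊕ {κ}^{⊕n_κ})} sinh(iζ+y-λ)/sinh(iζ+λ-y)`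
(signed multiplicities in the product). -/
def fProd (ζ : ℝ) (s : ℤ) {nx ny : ℕ} (x : Fin nx → ℂ) (y : Fin ny → ℂ)
    (nκ : ℤ) (κ lam : ℂ) : ℂ :=
  (-1 : ℂ) ^ s *
    ((∏ b, Complex.sinh (Complex.I * (ζ : ℝ) + y b - lam) /
        Complex.sinh (Complex.I * (ζ : ℝ) + lam - y b)) /
      ((∏ a, Complex.sinh (Complex.I * (ζ : ℝ) + x a - lam) /
          Complex.sinh (Complex.I * (ζ : ℝ) + lam - x a)) *
        (Complex.sinh (Complex.I * (ζ : ℝ) + κ - lam) /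
            Complex.sinh (Complex.I * (ζ : ℝ) + lam - κ)) ^ nκ))

open scoped Real

lemma norm_sinh_le_cosh_re (z : ℂ) : ‖sinh z‖ ≤ Real.cosh z.re := by
  have h := norm_sub_le (exp z) (exp (-z))
  rw [Complex.norm_exp, Complex.norm_exp, neg_re] at h
  rw [Complex.sinh, Real.cosh_eq, norm_div, Complex.norm_two]
  linarith

lemma cosh_le_one_add_abs_sinh (r : ℝ) : Real.cosh r ≤ 1 + |Real.sinh r| := by
  nlinarith [Real.cosh_sq r, sq_abs (Real.sinh r), abs_nonneg (Real.sinh r), Real.cosh_pos r]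

lemma norm_sinh_sq (z : ℂ) : ‖sinh z‖ ^ 2 = Real.sinh z.re ^ 2 + Real.sin z.im ^ 2 := by
  have hz : sinh z =
      (Real.sinh z.re * Real.cos z.im : ℝ) + (Real.cosh z.re * Real.sin z.im : ℝ) * I := by
    conv_lhs => rw [← re_add_im z]
    rw [sinh_add, cosh_mul_I, sinh_mul_I]
    push_cast [← ofReal_sinh, ← ofReal_cosh, ← ofReal_cos, ← ofReal_sin]
    ring
  rw [hz, Complex.sq_norm, normSq_add_mul_I]
  nlinarith [Real.sin_sq_add_cos_sq z.im, Real.cosh_sq z.re]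

lemma abs_sinh_re_le_norm_sinh (z : ℂ) : |Real.sinh z.re| ≤ ‖sinh z‖ :=
  abs_le_of_sq_le_sq (by nlinarith [norm_sinh_sq z, sq_nonneg (Real.sin z.im)]) (norm_nonneg _)

lemma abs_sin_im_le_norm_sinh (z : ℂ) : |Real.sin z.im| ≤ ‖sinh z‖ :=
  abs_le_of_sq_le_sq (by nlinarith [norm_sinh_sq z, sq_nonneg (Real.sinh z.re)]) (norm_nonneg _)

lemma norm_sinh_le_two_mul_norm {z : ℂ} (hz : ‖z‖ ≤ 1) : ‖sinh z‖ ≤ 2 * ‖z‖ := by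
  have h₁ := norm_exp_sub_one_le hz
  have h₂ := norm_exp_sub_one_le (x := -z) (by rwa [norm_neg])
  have h : sinh z = ((exp z - 1) - (exp (-z) - 1)) / 2 := by rw [Complex.sinh]; ring
  rw [norm_neg] at h₂
  rw [h, norm_div, Complex.norm_two]
  linarith [norm_sub_le (exp z - 1) (exp (-z) - 1)]

lemma norm_sub_I_mul_sq (y : ℂ) (c : ℝ) : ‖y - I * c‖ ^ 2 = y.re ^ 2 + (y.im - c) ^ 2 := by
  rw [Complex.sq_norm, normSq_apply]
  simp only [sub_re, mul_re, I_re, ofReal_re, zero_mul, I_im, ofReal_im, mul_zero, sub_self,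
    sub_zero, sub_im, mul_im, one_mul, zero_add]
  ring

lemma sin_le_abs_sin_of_forall_le_abs_sub {b θ : ℝ} (hb₀ : 0 ≤ b) (hb : b ≤ π / 2)
    (h : ∀ k : ℤ, b ≤ |θ - k * π|) : Real.sin b ≤ |Real.sin θ| := by
  set k := round (θ / π)
  have hk : |θ - k * π| ≤ π / 2 := by
    have := abs_sub_round (θ / π)
    rw [show θ - k * π = (θ / π - k) * π by field_simp, abs_mul, abs_of_pos Real.pi_pos]
    nlinarith [Real.pi_pos]
  have hsin : |Real.sin θ| = Real.sin |θ - k * π| := by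
    rw [← Real.abs_sin_eq_sin_abs_of_abs_le_pi (by linarith [Real.pi_pos]),
      Real.sin_sub_int_mul_pi, abs_mul, abs_zpow, abs_neg, abs_one, one_zpow, one_mul]
  rw [hsin]
  exact Real.sin_le_sin_of_le_of_le_pi_div_two (by linarith) hk (h k)

/-- `|sinh w|² = sinh² (Re w) + sin² (Im w)`, and either `|Re w| ≥ d` or `Im w` is `d`-far
from `πℤ`. -/
lemma min_sinh_sin_le_norm_sinh {d : ℝ} (hd₀ : 0 ≤ d) (hd : d ≤ π / 2) {w : ℂ}
    (h : ∀ k : ℤ, 2 * d ≤ ‖w - I * ((k * π : ℝ) : ℂ)‖) :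
    min (Real.sinh d) (Real.sin d) ≤ ‖sinh w‖ := by
  by_cases hre : d ≤ |w.re|
  · calc min (Real.sinh d) (Real.sin d) ≤ Real.sinh |w.re| :=
          (min_le_left _ _).trans (Real.sinh_le_sinh.mpr hre)
      _ ≤ ‖sinh w‖ := by rw [← Real.abs_sinh]; exact abs_sinh_re_le_norm_sinh w
  · refine (min_le_right _ _).trans ((sin_le_abs_sin_of_forall_le_abs_sub hd₀ hd fun k ↦ ?_).trans
      (abs_sin_im_le_norm_sinh w))
    have hdist : (2 * d) ^ 2 ≤ w.re ^ 2 + (w.im - k * π) ^ 2 :=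
      norm_sub_I_mul_sq w (k * π) ▸ pow_le_pow_left₀ (by linarith) (h k) 2
    have hre2 : w.re ^ 2 ≤ d ^ 2 := sq_le_sq.mpr (by rw [abs_of_nonneg hd₀]; linarith)
    simpa only [abs_of_nonneg hd₀] using sq_le_sq.mp (by nlinarith : d ^ 2 ≤ (w.im - k * π) ^ 2)

lemma norm_prod_le_pow_card {ι R : Type*} [NormedCommRing R] [NormOneClass R] (s : Finset ι)
    {f : ι → R} {M : ℝ} (hf : ∀ i ∈ s, ‖f i‖ ≤ M) : ‖∏ i ∈ s, f i‖ ≤ M ^ s.card :=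
  (Finset.norm_prod_le s f).trans <| (Finset.prod_le_prod (fun _ _ ↦ norm_nonneg _) hf).trans_eq
    (Finset.prod_const M)

lemma norm_prod_sub_prod_le {ι R : Type*} [NormedCommRing R] [NormOneClass R] (s : Finset ι)
    {f g : ι → R} {M δ : ℝ} (hM : 1 ≤ M) (hf : ∀ i ∈ s, ‖f i‖ ≤ M) (hg : ∀ i ∈ s, ‖g i‖ ≤ M)
    (hfg : ∀ i ∈ s, ‖f i - g i‖ ≤ δ) :
    ‖∏ i ∈ s, f i - ∏ i ∈ s, g i‖ ≤ s.card * M ^ s.card * δ := by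
  induction s using Finset.cons_induction with
  | empty => simp
  | cons a t ha ih =>
    simp only [Finset.forall_mem_cons] at hf hg hfg
    have hδ : 0 ≤ δ := (norm_nonneg _).trans hfg.1
    have hpow : M ^ t.card ≤ M ^ t.card * M := le_mul_of_one_le_right (by positivity) hM
    rw [Finset.prod_cons, Finset.prod_cons, Finset.card_cons,
      show f a * ∏ i ∈ t, f i - g a * ∏ i ∈ t, g i =
        (f a - g a) * ∏ i ∈ t, f i + g a * (∏ i ∈ t, f i - ∏ i ∈ t, g i) by ring]
    calc _ ≤ ‖f a - g a‖ * ‖∏ i ∈ t, f i‖ + ‖g a‖ * ‖∏ i ∈ t, f i - ∏ i ∈ t, g i‖ :=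
          (norm_add_le _ _).trans (add_le_add (norm_mul_le _ _) (norm_mul_le _ _))
      _ ≤ δ * M ^ t.card + M * (t.card * M ^ t.card * δ) :=
          add_le_add (mul_le_mul hfg.1 (norm_prod_le_pow_card t hf.2) (norm_nonneg _) hδ)
            (mul_le_mul hg.1 (ih hf.2 hg.2 hfg.2) (norm_nonneg _) (zero_le_one.trans hM))
      _ ≤ ((t.card + 1 : ℕ) : ℝ) * M ^ (t.card + 1) * δ := by
          rw [pow_succ]
          push_cast
          nlinarith [mul_le_mul_of_nonneg_right hpow hδ]

section SinhRatio

variable (ζ : ℝ)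

def sinhRatio (μ : ℂ) : ℂ := sinh (I * ζ + μ) / sinh (I * ζ - μ)

lemma sinhRatio_sub (u v : ℂ) :
    sinhRatio ζ (u - v) = sinh (I * ζ + u - v) / sinh (I * ζ + v - u) := by
  rw [sinhRatio, add_sub_assoc, sub_sub_eq_add_sub]

lemma sinhRatio_neg (μ : ℂ) : sinhRatio ζ (-μ) = (sinhRatio ζ μ)⁻¹ := by
  rw [sinhRatio, sinhRatio, inv_div, sub_neg_eq_add, ← sub_eq_add_neg]

lemma sinhRatio_zpow (μ : ℂ) (n : ℤ) :
    sinhRatio ζ μ ^ n = sinhRatio ζ (n.sign * μ) ^ n.natAbs := by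
  obtain ⟨k, rfl | rfl⟩ := Int.eq_nat_or_neg n <;> rcases eq_or_ne k 0 with rfl | hk
  · simp
  · simp [Int.sign_natCast_of_ne_zero hk]
  · simp
  · rw [zpow_neg, Int.sign_neg, Int.natAbs_neg, Int.natAbs_natCast, zpow_natCast,
      Int.sign_natCast_of_ne_zero hk, Int.cast_neg, Int.cast_one, neg_one_mul,
      sinhRatio_neg, inv_pow]

variable {ζ}

lemma sinhRatio_zero (hζ : sinh (I * ζ) ≠ 0) : sinhRatio ζ 0 = 1 := by
  rw [sinhRatio, add_zero, sub_zero, div_self hζ]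

lemma sinhRatio_sub_sinhRatio {μ ν : ℂ} (hμ : sinh (I * ζ - μ) ≠ 0)
    (hν : sinh (I * ζ - ν) ≠ 0) :
    sinhRatio ζ μ - sinhRatio ζ ν =
      sinh (2 * (I * ζ)) * sinh (μ - ν) / (sinh (I * ζ - μ) * sinh (I * ζ - ν)) := by
  rw [sinhRatio, sinhRatio, div_sub_div _ _ hμ hν]
  congr 1
  simp only [sinh_add, sinh_sub, sinh_two_mul]
  ring

lemma norm_sinhRatio_le {m : ℝ} (hm₀ : 0 < m) (hm₁ : m ≤ 1) {μ : ℂ}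
    (hμ : m ≤ ‖sinh (I * ζ - μ)‖) : ‖sinhRatio ζ μ‖ ≤ 2 / m := by
  have hnum : ‖sinh (I * ζ + μ)‖ ≤ 1 + ‖sinh (I * ζ - μ)‖ := by
    have h₁ : ‖sinh (I * ζ + μ)‖ ≤ Real.cosh μ.re := by
      simpa using norm_sinh_le_cosh_re (I * ζ + μ)
    have h₂ : |Real.sinh μ.re| ≤ ‖sinh (I * ζ - μ)‖ := by
      simpa using abs_sinh_re_le_norm_sinh (I * ζ - μ)
    linarith [cosh_le_one_add_abs_sinh μ.re]
  rw [sinhRatio, norm_div, div_le_div_iff₀ (by linarith) hm₀]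
  nlinarith

lemma norm_sinhRatio_sub_le {m : ℝ} (hm : 0 < m) {μ ν : ℂ} (hμ : m ≤ ‖sinh (I * ζ - μ)‖)
    (hν : m ≤ ‖sinh (I * ζ - ν)‖) (hμν : ‖μ - ν‖ ≤ 1) :
    ‖sinhRatio ζ μ - sinhRatio ζ ν‖ ≤ 2 * ‖μ - ν‖ / m ^ 2 := by
  rw [sinhRatio_sub_sinhRatio (norm_pos_iff.mp (hm.trans_le hμ))
    (norm_pos_iff.mp (hm.trans_le hν)), norm_div, norm_mul, norm_mul]
  have h₁ : ‖sinh (2 * (I * ζ))‖ ≤ 1 := by simpa using norm_sinh_le_cosh_re (2 * (I * ζ))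
  have h₂ := norm_sinh_le_two_mul_norm hμν
  apply div_le_div₀ (by positivity) _ (by positivity) (by nlinarith)
  nlinarith [norm_nonneg (sinh (μ - ν)), norm_nonneg (sinh (2 * (I * ζ)))]

end SinhRatio

section ZetaM

variable {ζ : ℝ}

lemma zetam_pos (hζ : ζ ∈ Set.Ioo 0 π) : 0 < zetam ζ := lt_min hζ.1 (by linarith [hζ.2])

lemma zetam_le_pi_div_two : zetam ζ ≤ π / 2 := by
  rw [zetam, min_le_iff]; by_contra!; linarith

lemma zetam_le_abs_sub_int_mul_pi (k : ℤ) : zetam ζ ≤ |ζ - k * π| := by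
  have := Real.pi_pos
  rcases le_or_gt k 0 with hk | hk
  · have hk' : (k : ℝ) ≤ 0 := by exact_mod_cast hk
    exact (min_le_left _ _).trans ((le_abs_self _).trans' (by nlinarith))
  · have hk' : (1 : ℝ) ≤ k := by exact_mod_cast hk
    exact (min_le_right _ _).trans ((neg_le_abs _).trans' (by nlinarith))

lemma abs_sub_zetam_le_or_abs_add_zetam_le (hζ : ζ ∈ Set.Ioo 0 π) {t : ℝ} (ht : |t| < π / 2)
    (k : ℤ) : |t - zetam ζ| ≤ |t - (ζ - k * π)| ∨ |t + zetam ζ| ≤ |t - (ζ - k * π)| := by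
  obtain ⟨hζ₀, hζπ⟩ := hζ
  obtain ⟨ht₁, ht₂⟩ := abs_lt.mp ht
  have hπ := Real.pi_pos
  simp only [← sq_le_sq]
  rcases le_total ζ (π - ζ) with h | h <;> simp only [zetam, min_eq_left, min_eq_right, h] <;>
    rcases (by omega : k ≤ -1 ∨ k = 0 ∨ k = 1 ∨ 2 ≤ k) with hk | rfl | rfl | hk <;>
    push_cast
  · have hP := mul_le_mul_of_nonneg_right (show (k : ℝ) ≤ -1 by exact_mod_cast hk) hπ.le
    left
    nlinarith [mul_nonneg (by linarith : 0 ≤ -(k * π)) (by linarith : 0 ≤ -(2 * (t - ζ) + k * π))]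
  · left; simp
  · right; nlinarith [mul_nonneg (by linarith : 0 ≤ π - 2 * ζ) (by linarith : 0 ≤ 2 * t + π)]
  · have hP := mul_le_mul_of_nonneg_right (show (2 : ℝ) ≤ k by exact_mod_cast hk) hπ.le
    right
    nlinarith [mul_nonneg (by linarith : 0 ≤ k * π - 2 * ζ) (by linarith : 0 ≤ 2 * t + k * π)]
  · have hP := mul_le_mul_of_nonneg_right (show (k : ℝ) ≤ -1 by exact_mod_cast hk) hπ.le
    left
    nlinarith [mul_nonneg (by linarith : 0 ≤ -(k * π - 2 * ζ + π))
      (by linarith : 0 ≤ -(2 * t - π + k * π))]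
  · left; nlinarith [mul_nonneg (by linarith : 0 ≤ 2 * ζ - π) (by linarith : 0 ≤ π - 2 * t)]
  · right; ring_nf; rfl
  · have hP := mul_le_mul_of_nonneg_right (show (2 : ℝ) ≤ k by exact_mod_cast hk) hπ.le
    right
    nlinarith [mul_nonneg (by linarith : 0 ≤ k * π - π)
      (by linarith : 0 ≤ 2 * t - 2 * ζ + k * π + π)]

lemma norm_sub_I_mul_le_of_abs_im_sub_le {y : ℂ} {c c' : ℝ} (h : |y.im - c'| ≤ |y.im - c|) :
    ‖y - I * c'‖ ≤ ‖y - I * c‖ := by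
  rw [← sq_le_sq₀ (norm_nonneg _) (norm_nonneg _), norm_sub_I_mul_sq, norm_sub_I_mul_sq]
  nlinarith [sq_le_sq.mpr h]

/-- The points `I * (ζ - k * π)` are the zeros of `v ↦ sinh (I * ζ - v)`. -/
lemma le_norm_sub_I_mul_of_mem_strip (hζ : ζ ∈ Set.Ioo 0 π) {α : ℝ} {y : ℂ}
    (hy : y ∈ strip (π / 2)) (h₁ : y ∉ Metric.ball (I * zetam ζ) α)
    (h₂ : y ∉ Metric.ball (-(I * zetam ζ)) α) (k : ℤ) :
    α ≤ ‖y - I * ((ζ - k * π : ℝ) : ℂ)‖ := by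
  rw [Metric.mem_ball, not_lt, dist_eq_norm] at h₁ h₂
  rcases abs_sub_zetam_le_or_abs_add_zetam_le hζ hy k with h | h
  · exact h₁.trans (norm_sub_I_mul_le_of_abs_im_sub_le h)
  · rw [show y - -(I * zetam ζ) = y - I * ((-zetam ζ : ℝ) : ℂ) by push_cast; ring] at h₂
    exact h₂.trans (norm_sub_I_mul_le_of_abs_im_sub_le (by rwa [sub_neg_eq_add]))

lemma min_sinh_sin_le_norm_sinh_I_mul_sub {a r δ : ℝ} (hδ₀ : 0 ≤ δ) (hδ : δ ≤ π / 2) {u v : ℂ}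
    (hu : ∀ k : ℤ, a ≤ ‖u - I * ((ζ - k * π : ℝ) : ℂ)‖) (hv : ‖v - u‖ ≤ r) (har : 2 * δ + r ≤ a) :
    min (Real.sinh δ) (Real.sin δ) ≤ ‖sinh (I * ζ - v)‖ := by
  refine min_sinh_sin_le_norm_sinh hδ₀ hδ fun k ↦ ?_
  have h := norm_sub_le_norm_sub_add_norm_sub u v (I * ((ζ - k * π : ℝ) : ℂ))
  rw [norm_sub_rev u v, norm_sub_rev v (I * _), show I * ((ζ - k * π : ℝ) : ℂ) - v =
    I * ζ - v - I * ((k * π : ℝ) : ℂ) by push_cast; ring] at h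
  linarith [hu k]

lemma min_sinh_sin_le_norm_sinh_of_near (hζ : ζ ∈ Set.Ioo 0 π) {α ε δ : ℝ} (hδ₀ : 0 ≤ δ)
    (hδζ : 2 * δ + 2 * ε ≤ zetam ζ) (hδα : 2 * δ + ε ≤ α) {ny : ℕ} {y : Fin ny → ℂ}
    (hy : ∀ b, y b ∈ strip (π / 2) \ (Metric.ball 0 ε ∪ Metric.ball (I * zetam ζ) α ∪
      Metric.ball (-(I * zetam ζ)) α)) {v : ℂ} (hv : ‖v‖ ≤ 2 * ε ∨ ∃ b, ‖v - y b‖ ≤ ε) :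
    min (Real.sinh δ) (Real.sin δ) ≤ ‖sinh (I * ζ - v)‖ := by
  have hε : 0 ≤ ε := by rcases hv with hv | ⟨b, hv⟩ <;> linarith [hv.trans' (norm_nonneg _)]
  have hδ : δ ≤ π / 2 := by linarith [zetam_le_pi_div_two (ζ := ζ)]
  obtain hv | ⟨b, hv⟩ := hv
  · refine min_sinh_sin_le_norm_sinh_I_mul_sub hδ₀ hδ (u := 0) (fun k ↦ ?_) (by simpa) hδζ
    rw [zero_sub, norm_neg, norm_mul, norm_I, one_mul, norm_real, Real.norm_eq_abs]
    exact zetam_le_abs_sub_int_mul_pi k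
  · obtain ⟨hstrip, hball⟩ := hy b
    simp only [Set.mem_union, not_or] at hball
    exact min_sinh_sin_le_norm_sinh_I_mul_sub hδ₀ hδ
      (le_norm_sub_I_mul_of_mem_strip hζ hstrip hball.1.2 hball.2) hv hδα

end ZetaM

/-- The arguments with `fProd = (-1)^s ∏ sinhRatio` (`fProd_eq_prod`); the factors of `X` and `κ`
that `fProd` divides by enter through `sinhRatio_neg`, as `λ - x` and `λ - κ`. -/
def fArgs {nx ny : ℕ} (x : Fin nx → ℂ) (y : Fin ny → ℂ) (nκ : ℤ) (κ lam : ℂ) :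
    Fin ny ⊕ Fin nx ⊕ Fin nκ.natAbs → ℂ :=
  Sum.elim (fun b ↦ y b - lam) (Sum.elim (fun a ↦ lam - x a) fun _ ↦ nκ.sign * (lam - κ))

lemma fProd_eq_prod (ζ : ℝ) (s : ℤ) {nx ny : ℕ} (x : Fin nx → ℂ) (y : Fin ny → ℂ) (nκ : ℤ)
    (κ lam : ℂ) :
    fProd ζ s x y nκ κ lam = (-1) ^ s * ∏ i, sinhRatio ζ (fArgs x y nκ κ lam i) := by
  simp only [fProd, fArgs, Fintype.prod_sum_type, Sum.elim_inl, Sum.elim_inr, Finset.prod_const,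
    Finset.card_univ, Fintype.card_fin, ← sinhRatio_zpow, ← sinhRatio_sub]
  rw [div_eq_mul_inv, mul_inv, ← Finset.prod_inv_distrib, ← inv_zpow]
  simp only [← sinhRatio_neg, neg_sub]

lemma prod_sinhRatio_sum_elim_zero {ζ : ℝ} (hζ : sinh (I * ζ) ≠ 0) {ny : ℕ} (y : Fin ny → ℂ)
    (ι : Type*) [Fintype ι] :
    ∏ i, sinhRatio ζ ((Sum.elim y 0 : Fin ny ⊕ ι → ℂ) i) =
      ∏ b, sinh (I * ζ + y b) / sinh (I * ζ - y b) := by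
  simp only [Fintype.prod_sum_type, Sum.elim_inl, Sum.elim_inr, Pi.zero_apply,
    sinhRatio_zero hζ, Finset.prod_const_one, mul_one]
  rfl

lemma norm_fProd_sub_le {ζ m ε : ℝ} (hm₀ : 0 < m) (hm₁ : m ≤ 1) (hε : ε ≤ 1 / 2) (s : ℤ)
    {nx ny : ℕ} {x : Fin nx → ℂ} {y : Fin ny → ℂ} (nκ : ℤ) {κ lam : ℂ} (hx : ∀ a, ‖x a‖ ≤ ε)
    (hκ : ‖κ‖ ≤ ε) (hlam : ‖lam‖ ≤ ε)
    (hden : ∀ v, (‖v‖ ≤ 2 * ε ∨ ∃ b, ‖v - y b‖ ≤ ε) → m ≤ ‖sinh (I * ζ - v)‖) :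
    ‖fProd ζ s x y nκ κ lam - (-1) ^ s * ∏ b, sinh (I * ζ + y b) / sinh (I * ζ - y b)‖ ≤
      ((ny + (nx + nκ.natAbs) : ℕ) : ℝ) * (2 / m) ^ (ny + (nx + nκ.natAbs)) * (4 / m ^ 2) * ε := by
  set μ := fArgs x y nκ κ lam
  set ν : Fin ny ⊕ Fin nx ⊕ Fin nκ.natAbs → ℂ := Sum.elim y 0
  have hnear : ∀ i, ‖μ i - ν i‖ ≤ 2 * ε ∧ (‖μ i‖ ≤ 2 * ε ∨ ∃ b, ‖μ i - y b‖ ≤ ε) ∧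
      (‖ν i‖ ≤ 2 * ε ∨ ∃ b, ‖ν i - y b‖ ≤ ε) := by
    have hε₀ : 0 ≤ ε := (norm_nonneg _).trans hlam
    have hsign : ‖(nκ.sign : ℂ)‖ ≤ 1 := by rcases nκ.sign_trichotomy with h | h | h <;> simp [h]
    have hlamκ : ‖lam - κ‖ ≤ 2 * ε := (norm_sub_le _ _).trans (by linarith)
    rintro (b | a | j) <;> simp only [μ, ν, fArgs, Sum.elim_inl, Sum.elim_inr, Pi.zero_apply]
    · exact ⟨by simpa using by linarith, .inr ⟨b, by simpa using hlam⟩, .inr ⟨b, by simpa⟩⟩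
    · have h : ‖lam - x a‖ ≤ 2 * ε := (norm_sub_le _ _).trans (by linarith [hx a])
      exact ⟨by simpa using h, .inl h, .inl (by simpa)⟩
    · have h : ‖nκ.sign * (lam - κ)‖ ≤ 2 * ε := by
        rw [norm_mul]; nlinarith [norm_nonneg (nκ.sign : ℂ), norm_nonneg (lam - κ)]
      exact ⟨by simpa using h, .inl h, .inl (by simpa)⟩
  have hzero : sinh (I * ζ) ≠ 0 := by
    refine norm_pos_iff.mp (hm₀.trans_le ?_)
    simpa using hden 0 (.inl (by simpa using (norm_nonneg lam).trans hlam))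
  rw [fProd_eq_prod, ← prod_sinhRatio_sum_elim_zero hzero y (Fin nx ⊕ Fin nκ.natAbs), ← mul_sub,
    norm_mul, norm_zpow, norm_neg, norm_one, one_zpow, one_mul]
  have h := norm_prod_sub_prod_le Finset.univ (f := fun i ↦ sinhRatio ζ (μ i))
    (g := fun i ↦ sinhRatio ζ (ν i)) (δ := 4 / m ^ 2 * ε) ((one_le_div hm₀).mpr (by linarith))
    (fun i _ ↦ norm_sinhRatio_le hm₀ hm₁ (hden _ (hnear i).2.1))
    (fun i _ ↦ norm_sinhRatio_le hm₀ hm₁ (hden _ (hnear i).2.2))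
    (fun i _ ↦ (norm_sinhRatio_sub_le hm₀ (hden _ (hnear i).2.1) (hden _ (hnear i).2.2)
      (by linarith [(hnear i).1])).trans (by
        rw [div_mul_eq_mul_div]
        exact div_le_div_of_nonneg_right (by linarith [(hnear i).1]) (by positivity)))
  simpa only [Finset.card_univ, Fintype.card_sum, Fintype.card_fin, mul_assoc] using h

lemma exists_pos_le_and_mul_lt {a r : ℝ} (ha : 0 < a) (hr : 0 < r) (C : ℝ) :
    ∃ ε, 0 < ε ∧ ε ≤ a ∧ C * ε < r := by
  have hC : ∀ᶠ ε in 𝓝 (0 : ℝ), C * ε < r :=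
    ((continuous_const_mul C).tendsto' 0 0 (mul_zero C)).eventually (eventually_lt_nhds hr)
  obtain ⟨ε, ⟨hεa, hεC⟩, hε₀⟩ := (((eventually_le_nhds ha).and hC).filter_mono nhdsWithin_le_nhds
    |>.and (self_mem_nhdsWithin (s := Set.Ioi 0))).exists
  exact ⟨ε, hε₀, hεa, hεC⟩

/-- **Lemma 5.2.** Fix `n_x, n_y ≥ 0`, `n_κ ∈ ℤ` and `α, ρ > 0`.  There exists
`0 < ε < α/2` such that for every pair `X, Y` in the class `C^ε_{α,ρ}` with cardinalities
`n_x, n_y` and every `κ` in the closed disc `D̄_{0,ε}`, one has `|1 + f(λ)| ≥ ρ/2` on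
`D̄_{0,ε}`; in particular `1 + f` has no zeroes there. -/
theorem one_add_f_lower_bound (ζ : ℝ) (hζ : ζ ∈ Set.Ioo 0 Real.pi)
    (s : ℤ) (nx ny : ℕ) (nκ : ℤ) (α ρ : ℝ) (hα : 0 < α) (hρ : 0 < ρ) :
    ∃ ε : ℝ, 0 < ε ∧ ε < α / 2 ∧
      ∀ (x : Fin nx → ℂ) (y : Fin ny → ℂ), InClassFam ζ ε α ρ s x y →
        ∀ κ ∈ Metric.closedBall (0 : ℂ) ε, ∀ lam ∈ Metric.closedBall (0 : ℂ) ε,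
          ρ / 2 ≤ Norm.norm (1 + fProd ζ s x y nκ κ lam) ∧
          1 + fProd ζ s x y nκ κ lam ≠ 0 := by
  set δ := min (zetam ζ) α / 4 with hδ
  set m := min (Real.sinh δ) (Real.sin δ)
  set N := ny + (nx + nκ.natAbs)
  have hδ₀ : 0 < δ := by have := zetam_pos hζ; positivity
  have hδζ : 4 * δ ≤ zetam ζ := by rw [hδ]; linarith [min_le_left (zetam ζ) α]
  have hδα : 4 * δ ≤ α := by rw [hδ]; linarith [min_le_right (zetam ζ) α]
  have hm₀ : 0 < m := lt_min (Real.sinh_pos_iff.mpr hδ₀)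
    (Real.sin_pos_of_pos_of_lt_pi hδ₀ (by linarith [zetam_le_pi_div_two (ζ := ζ), Real.pi_pos]))
  have hm₁ : m ≤ 1 := (min_le_right _ _).trans (Real.sin_le_one δ)
  obtain ⟨ε, hε₀, hεmin, hερ⟩ := exists_pos_le_and_mul_lt (lt_min hδ₀ one_half_pos) (half_pos hρ)
    (N * (2 / m) ^ N * (4 / m ^ 2))
  have hεδ : ε ≤ δ := hεmin.trans (min_le_left _ _)
  refine ⟨ε, hε₀, by linarith, fun x y hXY κ hκ lam hlam ↦ ?_⟩
  obtain ⟨-, -, hx, hy, hρXY⟩ := hXY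
  have hclose := norm_fProd_sub_le hm₀ hm₁ (hεmin.trans (min_le_right _ _)) s nκ
    (fun a ↦ (mem_ball_zero_iff.mp (hx a)).le) (mem_closedBall_zero_iff.mp hκ)
    (mem_closedBall_zero_iff.mp hlam)
    fun v hv ↦ min_sinh_sin_le_norm_sinh_of_near hζ hδ₀.le (by linarith) (by linarith) hy hv
  set f := fProd ζ s x y nκ κ lam
  set w := (-1) ^ s * ∏ b, sinh (I * ζ + y b) / sinh (I * ζ - y b)
  have hbound : ρ / 2 < ‖1 + f‖ := by
    have h := norm_sub_norm_le (w + 1) (1 + f)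
    rw [show w + 1 - (1 + f) = -(f - w) by ring, norm_neg] at h
    linarith
  exact ⟨hbound.le, norm_pos_iff.mp (by linarith)⟩

end XXZ
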